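/- arXiv:2006.00198 — 3 statements merged into one kernel-verified Lean document; each statement's English description precedes it below -/
import Mathlib

section
/- Let t ≥ 1 and n be integers with 2t ≥ n ≥ t + 1, and let k₊ > k₋ > 0 be integers. Then there is no set T ⊆ ℤⁿ such that the error-ball B(n,t,k₊,k₋) tiles ℤⁿ by T. -/
open Finset

/-- Hamming weight of an integer vector: the number of nonzero entries. -/
def wt {n : ℕ} (x : Fin n → ℤ) : ℕ := (Finset.univ.filter (fun i => x i ≠ 0)).card

/-- The `(n,t,k₊,k₋)`-error-ball in `ℤⁿ`. -/
def errBall (n t : ℕ) (kp km : ℤ) : Set (Fin n → ℤ) :=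
  {x | (∀ i, -km ≤ x i ∧ x i ≤ kp) ∧ wt x ≤ t}

/-- `Tiles B T` : every `z ∈ ℤⁿ` is uniquely `z = v + b` with `v ∈ T` and `b ∈ B`. -/
def Tiles {n : ℕ} (B T : Set (Fin n → ℤ)) : Prop :=
  ∀ z : Fin n → ℤ, ∃! p : (Fin n → ℤ) × (Fin n → ℤ),
    p.1 ∈ T ∧ p.2 ∈ B ∧ z = p.1 + p.2

/-! Fix a tile `v₀`. A vector `y` with entries in `[0, k₊ - k₋]` and more than `t` nonzero
entries is not in the ball, so the tile `τ` covering `v₀ + y` is not `v₀`. Since `n ≤ 2t`, every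
vector of `[-k₊, k₊]ⁿ` with at most `t` negative entries and at most `t` entries above `k₋` is a
difference of two ball elements, so `τ - v₀` has more than `t` entries above `k₋`. Lowering those
by `k₋` and zeroing the rest gives a new such `y` with a smaller coordinate sum, an infinite
descent. -/

variable {n t : ℕ} {kp km : ℤ}

lemma wt_le_card {x : Fin n → ℤ} {s : Finset (Fin n)} (h : ∀ i, x i ≠ 0 → i ∈ s) :
    wt x ≤ #s :=
  card_le_card fun i hi => h i (mem_filter.mp hi).2

lemma Tiles.eq_of_add_eq {B T : Set (Fin n → ℤ)} (hT : Tiles B T) {v w b₁ b₂ : Fin n → ℤ}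
    (hv : v ∈ T) (hw : w ∈ T) (h₁ : b₁ ∈ B) (h₂ : b₂ ∈ B) (h : v + b₁ = w + b₂) : v = w :=
  congrArg Prod.fst <|
    (hT (v + b₁)).unique (y₁ := (v, b₁)) (y₂ := (w, b₂)) ⟨hv, h₁, rfl⟩ ⟨hw, h₂, h⟩

/- `b₁` keeps the positive coordinates on a set `S` containing those above `km`; the remaining
positive ones lie in `(0, km]` and go to `-b₂`. `n ≤ 2 * t` leaves room to choose `#S`. -/
lemma exists_mem_errBall_sub_eq (hn : n ≤ 2 * t) (hkm : 0 ≤ km) {x : Fin n → ℤ}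
    (hx : ∀ i, -kp ≤ x i ∧ x i ≤ kp) (hlarge : #{i | km < x i} ≤ t)
    (hneg : #{i | x i < 0} ≤ t) :
    ∃ b₁ ∈ errBall n t kp km, ∃ b₂ ∈ errBall n t kp km, x = b₁ - b₂ := by
  set L : Finset (Fin n) := {i | km < x i}
  set P : Finset (Fin n) := {i | 0 < x i}
  set N : Finset (Fin n) := {i | x i < 0}
  have hLP : L ⊆ P := monotone_filter_right _ fun i _ h => hkm.trans_lt h
  have hPN : #P + #N ≤ n := by
    rw [← card_union_of_disjoint (disjoint_filter.2 fun i _ h h' => by omega)]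
    exact (card_le_univ _).trans_eq (Fintype.card_fin n)
  obtain ⟨S, hLS, hSP, hS⟩ := exists_subsuperset_card_eq hLP (le_max_left #L (#P + #N - t))
    (max_le (card_le_card hLP) (by omega))
  have hpos : ∀ i ∈ S, 0 < x i := fun i hi => (mem_filter.mp (hSP hi)).2
  have hsmall : ∀ i ∉ S, x i ≤ km := fun i hi => not_lt.mp fun h => hi (hLS (by simpa [L]))
  refine ⟨fun i => if i ∈ S then x i else 0, ⟨fun i => ?_, ?_⟩,
    fun i => (if i ∈ S then x i else 0) - x i, ⟨fun i => ?_, ?_⟩, by ext i; simp⟩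
  · have := hx i
    dsimp only
    split_ifs with hi
    · have := hpos i hi; omega
    · omega
  · refine (wt_le_card (s := S) fun i h => ?_).trans (by omega)
    by_contra hi
    simp [hi] at h
  · have := hx i
    dsimp only
    split_ifs with hi
    · omega
    · have := hsmall i hi; omega
  · refine (wt_le_card (s := (P \ S) ∪ N) fun i h => ?_).trans ?_
    · by_cases hi : i ∈ S
      · simp [hi] at h
      · simp only [hi, if_false, zero_sub, ne_eq, neg_eq_zero] at h
        rcases lt_or_gt_of_ne h with h | h
        · exact mem_union_right _ (by simpa [N])
        · exact mem_union_left _ (mem_sdiff.mpr ⟨by simpa [P], hi⟩)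
    · have := card_sdiff_of_subset hSP
      have := card_union_le (P \ S) N
      omega

lemma Tiles.lt_card_of_ne {T : Set (Fin n → ℤ)} (hT : Tiles (errBall n t kp km) T)
    (hn : n ≤ 2 * t) (hkm : 0 ≤ km) {v w : Fin n → ℤ} (hv : v ∈ T) (hw : w ∈ T) (hne : v ≠ w)
    (hbox : ∀ i, -kp ≤ (w - v) i ∧ (w - v) i ≤ kp) (hneg : #{i | (w - v) i < 0} ≤ t) :
    t < #{i | km < (w - v) i} := by
  by_contra! h
  obtain ⟨b₁, h₁, b₂, h₂, hsub⟩ := exists_mem_errBall_sub_eq hn hkm hbox h hneg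
  refine hne (hT.eq_of_add_eq hv hw h₁ h₂ ?_)
  rw [add_comm]
  exact (sub_eq_sub_iff_add_eq_add.mp hsub).symm

lemma Tiles.exists_sum_lt_of_lt_wt {T : Set (Fin n → ℤ)} (hT : Tiles (errBall n t kp km) T)
    (hn : n ≤ 2 * t) (hkm : 0 < km) {v₀ : Fin n → ℤ} (hv₀ : v₀ ∈ T) {y : Fin n → ℤ}
    (hy : ∀ i, 0 ≤ y i ∧ y i ≤ kp - km) (hwt : t < wt y) :
    ∃ y' : Fin n → ℤ, (∀ i, 0 ≤ y' i ∧ y' i ≤ kp - km) ∧ t < wt y' ∧ ∑ i, y' i < ∑ i, y i := by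
  obtain ⟨⟨τ, b⟩, ⟨hτ, ⟨hb, hwtb⟩, hcov⟩, -⟩ := hT (v₀ + y)
  dsimp only at hτ hb hwtb hcov
  have hx : ∀ i, (τ - v₀) i = y i - b i := fun i => by
    have := congrFun hcov i
    simp only [Pi.add_apply, Pi.sub_apply] at this ⊢
    omega
  have hne : v₀ ≠ τ := by
    rintro rfl
    have : y = b := funext fun i => sub_eq_zero.mp ((hx i).symm.trans (by simp))
    exact hwt.not_ge (this ▸ hwtb)
  have hA := hT.lt_card_of_ne hn hkm.le hv₀ hτ hne
    (fun i => by have := hy i; have := hb i; rw [hx]; omega)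
    ((card_le_card fun i hi => by
      simp only [mem_filter, mem_univ, true_and, hx] at hi ⊢
      have := hy i; omega).trans hwtb)
  obtain ⟨j, hjA, hjb⟩ := exists_mem_notMem_of_card_lt_card (hwtb.trans_lt hA)
  simp only [mem_filter, mem_univ, true_and, not_not, hx] at hjA hjb
  refine ⟨fun i => max ((τ - v₀) i - km) 0, fun i => ?_, ?_,
    sum_lt_sum (fun i _ => ?_) ⟨j, mem_univ _, ?_⟩⟩
  · have := hy i; have := hb i; simp only [hx]; omega
  · refine hA.trans_eq (congrArg card (filter_congr fun i _ => ?_))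
    simp only [hx]; omega
  · have := hy i; have := hb i; simp only [hx]; omega
  · simp only [hx]; omega

theorem stmt_5_general (n t : ℕ) (kp km : ℤ) (hn1 : t + 1 ≤ n) (hn2 : n ≤ 2 * t)
    (hkm : 0 < km) (hkp : km < kp) :
    ¬ ∃ T : Set (Fin n → ℤ), Tiles (errBall n t kp km) T := by
  rintro ⟨T, hT⟩
  obtain ⟨⟨v₀, b₀⟩, ⟨hv₀, -⟩, -⟩ := hT 0
  obtain ⟨-, ⟨y, hy, hwt, rfl⟩, hmin⟩ := Int.exists_least_of_bdd
    (P := fun s => ∃ y : Fin n → ℤ, (∀ i, 0 ≤ y i ∧ y i ≤ kp - km) ∧ t < wt y ∧ ∑ i, y i = s)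
    ⟨0, fun _ ⟨y, hy, _, hs⟩ => hs ▸ sum_nonneg fun i _ => (hy i).1⟩
    ⟨_, fun _ => 1, fun _ => ⟨zero_le_one, by dsimp only; omega⟩, by simpa [wt] using hn1, rfl⟩
  obtain ⟨y', hy', hwt', hlt⟩ := hT.exists_sum_lt_of_lt_wt hn2 hkm hv₀ hy hwt
  exact (hmin _ ⟨y', hy', hwt', rfl⟩).not_gt hlt

theorem stmt_5 (n t : ℕ) (kp km : ℤ) (ht : 1 ≤ t) (hn1 : t + 1 ≤ n) (hn2 : n ≤ 2 * t)
    (hkm : 0 < km) (hkp : km < kp) :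
    ¬ ∃ T : Set (Fin n → ℤ), Tiles (errBall n t kp km) T :=
  stmt_5_general n t kp km hn1 hn2 hkm hkp
end

section
/- Let t ≥ 1 and n be integers, let k₊ ≥ k₋ ≥ 0 be integers, and let α be a real number with 0 < α, α ≤ t/n, and t/n ≤ 1/2. If (k₋+1)² / (k₊+k₋+1) ≥ e/α (where e is Euler's number), then there is no lattice Λ ⊆ ℤⁿ (additive subgroup of ℤⁿ) such that the error-ball B(n,t,k₊,k₋) tiles ℤⁿ by Λ. -/
/-!
A lattice tiling by `B` makes `B` a system of representatives of `ℤⁿ / Λ`, so a finite set `A`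
whose differences all lie in `B - B` injects into `B`. The box `A = [0, k₋]^{2t} × {0}^{n-2t}`
(which needs `2t ≤ n`) is such a set: a difference of two of its points is the difference of its
restriction to the first `t` coordinates and minus its restriction to the next `t`. Hence
`(k₋ + 1)^{2t} = |A| ≤ |B| ≤ ∑_{i ≤ t} C(n, i) (k₊ + k₋)^i ≤ (e n / t)^t (k₊ + k₋)^t`,
and `α ≤ t / n` turns this into `(k₋ + 1)² < (e / α) (k₊ + k₋ + 1)`, against the hypothesis.
-/

open Finset

namespace Tiles

variable {n : ℕ} {B : Set (Fin n → ℤ)} {Λ : AddSubgroup (Fin n → ℤ)}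

theorem eq_of_sub_mem (h : Tiles B Λ) {b b' : Fin n → ℤ} (hb : b ∈ B) (hb' : b' ∈ B)
    (hsub : b - b' ∈ Λ) : b = b' := by
  have := (h b).unique (y₁ := (b - b', b')) (y₂ := (0, b))
    ⟨hsub, hb', (sub_add_cancel b b').symm⟩ ⟨zero_mem Λ, hb, (zero_add b).symm⟩
  exact (congrArg Prod.snd this).symm

theorem exists_sub_mem (h : Tiles B Λ) (z : Fin n → ℤ) : ∃ b ∈ B, z - b ∈ Λ := by
  obtain ⟨⟨v, b⟩, hv, hb, rfl⟩ := (h z).exists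
  exact ⟨b, hb, by simpa using hv⟩

theorem card_le (h : Tiles B Λ) {A S : Finset (Fin n → ℤ)} (hBS : B ⊆ S)
    (hA : ∀ a ∈ A, ∀ a' ∈ A, ∃ c ∈ B, ∃ c' ∈ B, a - a' = c - c') : #A ≤ #S := by
  choose f hfB hfΛ using h.exists_sub_mem
  refine card_le_card_of_injOn f (fun a _ => hBS (hfB a)) fun a ha a' ha' hfa => ?_
  obtain ⟨c, hc, c', hc', hcc⟩ := hA a ha a' ha'
  have hccΛ : c - c' ∈ Λ := by
    have := sub_mem (hfΛ a) (hfΛ a')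
    rwa [hfa, sub_sub_sub_cancel_right, hcc] at this
  rw [← sub_eq_zero, hcc, h.eq_of_sub_mem hc hc' hccΛ, sub_self]

end Tiles

theorem wt_le_card_of_ne_zero {n : ℕ} {x : Fin n → ℤ} (s : Finset ℕ)
    (hs : ∀ i, x i ≠ 0 → (i : ℕ) ∈ s) : wt x ≤ #s :=
  card_le_card_of_injOn Fin.val (fun i hi => hs i (mem_filter.mp hi).2)
    Fin.val_injective.injOn

def ballFinset (n t : ℕ) (s : Finset ℤ) : Finset (Fin n → ℤ) :=
  {x ∈ Fintype.piFinset fun _ => s | wt x ≤ t}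

theorem coe_ballFinset_Icc (n t : ℕ) (kp km : ℤ) :
    (ballFinset n t (Icc (-km) kp) : Set (Fin n → ℤ)) = errBall n t kp km := by
  ext x
  simp [ballFinset, errBall]

theorem card_ballFinset_le (n t : ℕ) (s : Finset ℤ) :
    #(ballFinset n t s) ≤ ∑ i ∈ range (t + 1), n.choose i * #(s.erase 0) ^ i := by
  classical
  let piF : Finset (Fin n) → Finset (Fin n → ℤ) := fun S =>
    Fintype.piFinset fun j => if j ∈ S then s.erase 0 else {0}
  have hsub : ballFinset n t s ⊆
      (range (t + 1)).biUnion fun i => (powersetCard i univ).biUnion piF := by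
    intro x hx
    simp only [ballFinset, mem_filter, Fintype.mem_piFinset] at hx
    refine mem_biUnion.mpr ⟨wt x, mem_range.mpr (Nat.lt_succ_of_le hx.2), ?_⟩
    refine mem_biUnion.mpr
      ⟨({j | x j ≠ 0} : Finset (Fin n)), mem_powersetCard.mpr ⟨subset_univ _, rfl⟩, ?_⟩
    refine Fintype.mem_piFinset.mpr fun j => ?_
    by_cases hj : x j = 0 <;> simp [hj, hx.1 j]
  have hpiF : ∀ i, ∀ S ∈ powersetCard i (univ : Finset (Fin n)),
      #(piF S) = #(s.erase 0) ^ i := by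
    intro i S hS
    rw [Fintype.card_piFinset, ← (mem_powersetCard.mp hS).2]
    simp [apply_ite card, prod_ite_mem]
  calc #(ballFinset n t s)
      ≤ ∑ i ∈ range (t + 1), #((powersetCard i univ).biUnion piF) :=
        (card_le_card hsub).trans card_biUnion_le
    _ ≤ ∑ i ∈ range (t + 1), ∑ S ∈ powersetCard i univ, #(piF S) :=
        sum_le_sum fun i _ => card_biUnion_le
    _ = ∑ i ∈ range (t + 1), n.choose i * #(s.erase 0) ^ i := by
        refine sum_congr rfl fun i _ => ?_
        rw [sum_congr rfl (hpiF i), sum_const, card_powersetCard, card_univ, Fintype.card_fin,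
          smul_eq_mul]

theorem card_errBall_le (n t : ℕ) {kp km : ℤ} (hkm : 0 ≤ km) (hkp : 0 ≤ kp) :
    (#(ballFinset n t (Icc (-km) kp)) : ℝ) ≤
      ∑ i ∈ range (t + 1), (n.choose i : ℝ) * ((kp : ℝ) + km) ^ i := by
  have hcard : ((#((Icc (-km) kp).erase 0) : ℕ) : ℤ) = kp + km := by
    rw [card_erase_of_mem (by simp; omega), Int.card_Icc]
    omega
  have hcardR : ((#((Icc (-km) kp).erase 0) : ℕ) : ℝ) = kp + km := by exact_mod_cast hcard
  rw [← hcardR]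
  exact_mod_cast card_ballFinset_le n t (Icc (-km) kp)

noncomputable def initialBox (n m : ℕ) (k : ℤ) : Finset (Fin n → ℤ) :=
  Fintype.piFinset fun i => if (i : ℕ) < m then Icc 0 k else {0}

theorem card_initialBox {n m : ℕ} {k : ℤ} (hm : m ≤ n) (hk : 0 ≤ k) :
    (#(initialBox n m k) : ℝ) = ((k : ℝ) + 1) ^ m := by
  have hIcc : ((#(Icc 0 k) : ℕ) : ℝ) = k + 1 := by
    rw [Int.card_Icc, sub_zero]
    exact_mod_cast Int.toNat_of_nonneg (by omega)
  rw [initialBox, Fintype.card_piFinset, Nat.cast_prod]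
  simp only [apply_ite card, card_singleton, apply_ite Nat.cast, Nat.cast_one, hIcc]
  rw [prod_ite, prod_const, prod_const_one, mul_one, Fin.card_filter_val_lt, min_eq_right hm]

theorem exists_sub_eq_of_mem_initialBox {n t : ℕ} {kp km : ℤ} (hkm : 0 ≤ km) (hkp : km ≤ kp)
    {a a' : Fin n → ℤ} (ha : a ∈ initialBox n (2 * t) km) (ha' : a' ∈ initialBox n (2 * t) km) :
    ∃ c ∈ errBall n t kp km, ∃ c' ∈ errBall n t kp km, a - a' = c - c' := by
  simp only [initialBox, Fintype.mem_piFinset] at ha ha'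
  have hbound : ∀ i : Fin n, -km ≤ a i - a' i ∧ a i - a' i ≤ km := by
    intro i
    have h := ha i; have h' := ha' i
    split_ifs at h h' <;> simp only [mem_Icc, mem_singleton] at h h' <;> omega
  have hzero : ∀ i : Fin n, 2 * t ≤ i → a i - a' i = 0 := by
    intro i hi
    have h := ha i; have h' := ha' i
    rw [if_neg (by omega), mem_singleton] at h h'
    rw [h, h', sub_self]
  refine ⟨fun i => if (i : ℕ) < t then a i - a' i else 0, ⟨fun i => ?_, ?_⟩,
    fun i => if (i : ℕ) < t then 0 else a' i - a i, ⟨fun i => ?_, ?_⟩, ?_⟩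
  · have := hbound i
    dsimp only
    split_ifs <;> omega
  · refine (wt_le_card_of_ne_zero (range t) fun i hi => ?_).trans (card_range t).le
    by_contra h
    simp [mem_range.not.mp h] at hi
  · have := hbound i
    dsimp only
    split_ifs <;> omega
  · refine (wt_le_card_of_ne_zero (Ico t (2 * t)) fun i hi => ?_).trans (by simp; omega)
    by_cases h : (i : ℕ) < t
    · simp [h] at hi
    · have := hzero i
      simp only [h, if_false, ne_eq] at hi
      simp only [mem_Ico]
      omega
  · ext i
    simp only [Pi.sub_apply]
    split_ifs <;> ring

theorem sum_range_choose_le_exp_mul_div_pow {n t : ℕ} (ht : 0 < t) (htn : t ≤ n) :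
    ∑ i ∈ range (t + 1), (n.choose i : ℝ) ≤ (Real.exp 1 * n / t) ^ t := by
  have htR : (0 : ℝ) < t := by exact_mod_cast ht
  have hnR : (0 : ℝ) < n := by exact_mod_cast ht.trans_le htn
  set x : ℝ := t / n
  have hx : 0 < x := by positivity
  have hxn : x * n = t := div_mul_cancel₀ _ hnR.ne'
  have hterm : ∀ i ∈ range (t + 1), (n.choose i : ℝ) ≤ x⁻¹ ^ t * (n.choose i * x ^ i) := by
    intro i hi
    have hit : i ≤ t := Nat.lt_succ_iff.mp (mem_range.mp hi)
    have hx1 : 1 ≤ x⁻¹ := one_le_inv₀ (by positivity) |>.mpr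
      ((div_le_one hnR).mpr (by exact_mod_cast htn))
    calc (n.choose i : ℝ) ≤ n.choose i * x⁻¹ ^ (t - i) :=
          le_mul_of_one_le_right (by positivity) (one_le_pow₀ hx1)
      _ = x⁻¹ ^ t * (n.choose i * x ^ i) := by
          rw [pow_sub₀ _ (inv_ne_zero hx.ne') hit, inv_pow, inv_pow, inv_inv]; ring
  have hbinom : ∑ i ∈ range (t + 1), (n.choose i : ℝ) * x ^ i ≤ Real.exp 1 ^ t :=
    calc ∑ i ∈ range (t + 1), (n.choose i : ℝ) * x ^ i
        ≤ ∑ i ∈ range (n + 1), (n.choose i : ℝ) * x ^ i :=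
          sum_le_sum_of_subset_of_nonneg (range_subset_range.mpr (by omega))
            fun i _ _ => by positivity
      _ = (x + 1) ^ n := by rw [add_pow]; exact sum_congr rfl fun i _ => by ring
      _ ≤ Real.exp x ^ n := pow_le_pow_left₀ (by positivity) (Real.add_one_le_exp x) n
      _ = Real.exp 1 ^ t := by rw [← Real.exp_nat_mul, ← Real.exp_nat_mul, mul_comm, hxn, mul_one]
  calc ∑ i ∈ range (t + 1), (n.choose i : ℝ)
      ≤ x⁻¹ ^ t * ∑ i ∈ range (t + 1), (n.choose i : ℝ) * x ^ i := by
        rw [mul_sum]; exact sum_le_sum hterm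
    _ ≤ x⁻¹ ^ t * Real.exp 1 ^ t := by gcongr
    _ = (Real.exp 1 * n / t) ^ t := by rw [← mul_pow]; congr 1; simp only [x]; field_simp

theorem sum_choose_mul_pow_lt {n t : ℕ} (ht : 0 < t) (htn : t ≤ n) {c α A : ℝ} (hc : 1 ≤ c)
    (hα0 : 0 < α) (hα : α ≤ t / n) (hA : Real.exp 1 / α * (c + 1) ≤ A) :
    ∑ i ∈ range (t + 1), (n.choose i : ℝ) * c ^ i < A ^ t := by
  have hnR : (0 : ℝ) < n := by exact_mod_cast ht.trans_le htn
  have hratio : Real.exp 1 * n / t ≤ Real.exp 1 / α := by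
    rw [div_le_div_iff₀ (by exact_mod_cast ht) hα0]
    have := (le_div_iff₀ hnR).mp hα
    nlinarith [Real.exp_pos 1]
  calc ∑ i ∈ range (t + 1), (n.choose i : ℝ) * c ^ i
      ≤ ∑ i ∈ range (t + 1), (n.choose i : ℝ) * c ^ t :=
        sum_le_sum fun i hi => by
          gcongr
          exact Nat.lt_succ_iff.mp (mem_range.mp hi)
    _ ≤ (Real.exp 1 / α) ^ t * c ^ t := by
        rw [← sum_mul]
        gcongr
        exact (sum_range_choose_le_exp_mul_div_pow ht htn).trans (by gcongr)
    _ < (Real.exp 1 / α) ^ t * (c + 1) ^ t := by gcongr; linarith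
    _ ≤ A ^ t := by rw [← mul_pow]; gcongr

theorem stmt_9 (n t : ℕ) (kp km : ℤ) (ht : 1 ≤ t)
    (hkm : 0 ≤ km) (hkp : km ≤ kp)
    (α : ℝ) (hα0 : 0 < α) (hα1 : α ≤ (t : ℝ) / (n : ℝ))
    (hhalf : (t : ℝ) / (n : ℝ) ≤ 1 / 2)
    (hbig : Real.exp 1 / α ≤ ((km : ℝ) + 1) ^ 2 / ((kp : ℝ) + (km : ℝ) + 1)) :
    ¬ ∃ Λ : AddSubgroup (Fin n → ℤ),
      Tiles (errBall n t kp km) (Λ : Set (Fin n → ℤ)) := by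
  have hnR : (0 : ℝ) < n := by
    rcases Nat.eq_zero_or_pos n with rfl | hn
    · simp at hα1; linarith
    · exact_mod_cast hn
  have h2t : 2 * t ≤ n := by
    have := (div_le_iff₀ hnR).mp hhalf
    exact_mod_cast (by linarith : (2 * t : ℝ) ≤ n)
  -- `kp = km = 0` would force `e / α ≤ 1`, impossible as `α ≤ 1/2`.
  have hc : (1 : ℝ) ≤ kp + km := by
    have : (1 : ℤ) ≤ kp + km := by
      by_contra h
      obtain ⟨rfl, rfl⟩ : kp = 0 ∧ km = 0 := by omega
      norm_num [div_le_one hα0] at hbig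
      linarith [Real.add_one_le_exp 1]
    exact_mod_cast this
  have hA : Real.exp 1 / α * ((kp + km : ℝ) + 1) ≤ ((km : ℝ) + 1) ^ 2 := by
    rwa [le_div_iff₀ (by linarith)] at hbig
  rintro ⟨Λ, hT⟩
  have hpack := hT.card_le (coe_ballFinset_Icc n t kp km).ge
    fun a ha a' ha' => exists_sub_eq_of_mem_initialBox hkm hkp ha ha'
  have hcount := (card_errBall_le n t hkm (hkm.trans hkp)).trans_lt
    (sum_choose_mul_pow_lt ht (by omega) hc hα0 hα1 hA)
  rw [← pow_mul, ← card_initialBox h2t hkm] at hcount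
  exact hpack.not_gt (by exact_mod_cast hcount)
end

section
/- Let n, t, k₊ be integers with 2 ≤ t, 4t < n, and k₊ ≥ 2·C(n,t) − 2. Then there is no lattice Λ ⊆ ℤⁿ (additive subgroup of ℤⁿ) such that the error-ball B(n,t,k₊,0) tiles ℤⁿ by Λ. -/
open Finset

/-!
Suppose the lattice `Λ` tiles `ℤⁿ` by the ball `B = B(n,t,k₊,0)`, and write `N = C(n,t)`.
Two points of `[0,k₊]ⁿ` that are congruent modulo `Λ` and each exceed the other in at most `t`
coordinates are equal. Hence, for a `(t+1)`-set `V`, a nonzero lattice vector supported on `V`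
with entries in `[-k₊, k₊]` is strictly positive or strictly negative on all of `V`. Since
`|B| < N (k₊+1)^t`, pigeonholing in boxes `[0,k₊]^V` shows that the positive lattice vectors
on `V` with entries `≤ k₊` have a least element `μ_V`, all of whose entries are `< N`.

Fix a coordinate `c`. The values `μ_V(c)` for the `C(n-1,t)` sets `V ∋ c` are distinct, lie in
`[1, N-1]`, and none is twice another, as `2μ_V` is again such a vector (`2(N-1) ≤ k₊`). A
doubling-free subset of `[1, X]` has at most `(3X+1)/4` elements, but `4 C(n-1,t) > 3N` when
`4t < n`.
-/

section Tiling

variable {n : ℕ} {B : Set (Fin n → ℤ)} {Λ : AddSubgroup (Fin n → ℤ)}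

theorem Tiles.eq_of_sub_mem_s11 (hT : Tiles B Λ) {b b' : Fin n → ℤ} (hb : b ∈ B) (hb' : b' ∈ B)
    (h : b - b' ∈ Λ) : b = b' := by
  have := (hT b).unique (y₁ := (0, b)) (y₂ := (b - b', b'))
    ⟨Λ.zero_mem, hb, (zero_add b).symm⟩ ⟨h, hb', (sub_add_cancel b b').symm⟩
  exact congrArg Prod.snd this

theorem Tiles.card_le_ncard (hT : Tiles B Λ) (hB : B.Finite) {S : Finset (Fin n → ℤ)}
    (hS : ∀ x ∈ S, ∀ y ∈ S, x - y ∈ Λ → x = y) : #S ≤ B.ncard := by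
  choose p hpΛ hpB hp using fun z => (hT z).exists
  rw [← Set.ncard_coe_finset]
  refine Set.ncard_le_ncard_of_injOn (fun z => (p z).2) (fun z _ => hpB z) ?_ hB
  intro x hx y hy (hxy : (p x).2 = (p y).2)
  refine hS x hx y hy ?_
  have : x - y = (p x).1 - (p y).1 :=
    calc x - y = ((p x).1 + (p x).2) - ((p y).1 + (p y).2) := by rw [← hp x, ← hp y]
      _ = (p x).1 - (p y).1 := by rw [hxy]; abel
  rw [this]
  exact sub_mem (hpΛ x) (hpΛ y)

end Tiling

theorem two_le_choose {n t : ℕ} (ht : 1 ≤ t) (htn : t < n) : 2 ≤ n.choose t := by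
  obtain ⟨m, rfl⟩ : ∃ m, n = m + 1 := ⟨n - 1, by omega⟩
  obtain ⟨s, rfl⟩ : ∃ s, t = s + 1 := ⟨t - 1, by omega⟩
  rw [Nat.choose_succ_succ']
  have := Nat.choose_pos (n := m) (k := s) (by omega)
  have := Nat.choose_pos (n := m) (k := s + 1) (by omega)
  omega

theorem three_mul_choose_lt {n t : ℕ} (htn : 4 * t < n) :
    3 * n.choose t < 4 * (n - 1).choose t := by
  have hN := Nat.choose_pos (n := n) (k := t) (by omega)
  have hid : (n - 1).choose t * n = n.choose t * (n - t) := by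
    have := Nat.choose_mul_succ_eq (n - 1) t
    rwa [Nat.sub_add_cancel (by omega)] at this
  refine Nat.lt_of_mul_lt_mul_right (a := n) ?_
  calc 3 * n.choose t * n = n.choose t * (3 * n) := by ring
    _ < n.choose t * (4 * (n - t)) := Nat.mul_lt_mul_of_pos_left (by omega) hN
    _ = 4 * (n - 1).choose t * n := by rw [mul_assoc, hid]; ring

/-- `A` and the doubles of its elements up to `X / 2` are disjoint in `[1, X]`, while at most
`X - X / 2` elements of `A` exceed `X / 2`. -/
theorem four_mul_card_le_of_two_mul_notMem {A : Finset ℕ} {X : ℕ} (hA : A ⊆ Icc 1 X)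
    (h2 : ∀ a ∈ A, 2 * a ∉ A) : 4 * #A ≤ 3 * X + 1 := by
  set low := A.filter (fun a => 2 * a ≤ X)
  have hlow : #A + #low ≤ X := by
    have hdisj : Disjoint A (low.image (2 * ·)) := by
      simp only [disjoint_right, mem_image, low, mem_filter]
      rintro _ ⟨a, ⟨ha, -⟩, rfl⟩
      exact h2 a ha
    have hsub : A ∪ low.image (2 * ·) ⊆ Icc 1 X := by
      refine union_subset hA ?_
      simp only [subset_iff, mem_image, low, mem_filter, mem_Icc]
      rintro _ ⟨a, ⟨ha, hax⟩, rfl⟩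
      have := mem_Icc.mp (hA ha)
      omega
    have := card_le_card hsub
    rwa [card_union_of_disjoint hdisj, card_image_of_injective _ (mul_right_injective₀ two_ne_zero),
      Nat.card_Icc, Nat.add_sub_cancel] at this
  have hhigh : #A ≤ #low + (X - X / 2) := by
    have hsub : A.filter (fun a => ¬ 2 * a ≤ X) ⊆ Icc (X / 2 + 1) X := by
      intro a ha
      obtain ⟨haA, hax⟩ := mem_filter.mp ha
      have := mem_Icc.mp (hA haA)
      exact mem_Icc.mpr ⟨by omega, this.2⟩
    have := card_le_card hsub
    rw [Nat.card_Icc] at this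
    have : #low + #(A.filter fun a => ¬ 2 * a ≤ X) = #A := card_filter_add_card_filter_not _
    omega
  omega

section ErrorBall

variable {n t : ℕ} {kp : ℤ}

def corner (V : Finset (Fin n)) (a : ℤ) : Fin n → ℤ := fun i => if i ∈ V then a else 0

theorem mem_Icc_corner {V : Finset (Fin n)} {a : ℤ} {x : Fin n → ℤ} :
    x ∈ Icc 0 (corner V a) ↔ ∀ i, (i ∈ V → 0 ≤ x i ∧ x i ≤ a) ∧ (i ∉ V → x i = 0) := by
  simp only [Finset.mem_Icc, Pi.le_def, Pi.zero_apply, corner, ← forall_and]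
  refine forall_congr' fun i => ?_
  by_cases hi : i ∈ V <;> simp [hi, le_antisymm_iff, and_comm]

theorem bounds_of_mem_Icc_corner {V : Finset (Fin n)} (hkp : 0 ≤ kp) {x : Fin n → ℤ}
    (hx : x ∈ Icc 0 (corner V kp)) (i : Fin n) : 0 ≤ x i ∧ x i ≤ kp := by
  by_cases hi : i ∈ V
  · exact (mem_Icc_corner.1 hx i).1 hi
  · rw [(mem_Icc_corner.1 hx i).2 hi]
    exact ⟨le_rfl, hkp⟩

theorem mem_Icc_update_corner {V : Finset (Fin n)} {i : Fin n} (hi : i ∈ V) {m : ℤ}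
    (hm : m ≤ kp) {x : Fin n → ℤ} (hx : x ∈ Icc 0 (Function.update (corner V kp) i m)) :
    x ∈ Icc 0 (corner V kp) ∧ x i ≤ m := by
  obtain ⟨hx0, hx1⟩ := mem_Icc.1 hx
  have hxi : x i ≤ m := by simpa using hx1 i
  refine ⟨mem_Icc.2 ⟨hx0, fun j => ?_⟩, hxi⟩
  rcases eq_or_ne j i with rfl | hj
  · simpa [corner, hi] using hxi.trans hm
  · simpa [Function.update_of_ne hj] using hx1 j

theorem card_Icc_zero (u : Fin n → ℤ) : #(Icc 0 u) = ∏ i, (u i + 1).toNat := by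
  simp [Pi.card_Icc, Int.card_Icc]

theorem card_Icc_corner (V : Finset (Fin n)) (a : ℤ) :
    #(Icc 0 (corner V a)) = (a + 1).toNat ^ #V := by
  rw [card_Icc_zero]
  calc ∏ i, (corner V a i + 1).toNat = ∏ i, if i ∈ V then (a + 1).toNat else 1 :=
        prod_congr rfl fun i _ => by unfold corner; split_ifs <;> rfl
    _ = (a + 1).toNat ^ #V := by rw [prod_ite_mem, univ_inter, prod_const]

theorem card_Icc_zero_update_mul (u : Fin n → ℤ) (i : Fin n) (m : ℤ) :
    #(Icc 0 (Function.update u i m)) * (u i + 1).toNat = (m + 1).toNat * #(Icc 0 u) := by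
  rw [card_Icc_zero, card_Icc_zero, Fintype.prod_eq_mul_prod_compl i,
    Fintype.prod_eq_mul_prod_compl i (fun j => (u j + 1).toNat), Function.update_self,
    prod_congr rfl fun j hj => by rw [Function.update_of_ne (by simpa using hj)]]
  ring

theorem errBall_zero_finite : (errBall n t kp 0).Finite :=
  (Set.finite_Icc 0 fun _ => kp).subset fun x hx =>
    ⟨fun i => by simpa using (hx.1 i).1, fun i => (hx.1 i).2⟩

theorem errBall_zero_subset (htn : t ≤ n) :
    errBall n t kp 0 ⊆
      ↑(insert (0 : Fin n → ℤ)
        ((univ.powersetCard t).biUnion fun T => (Icc 0 (corner T kp)).erase 0)) := by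
  intro x ⟨hx, hwt⟩
  by_cases hx0 : x = 0
  · simp [hx0]
  obtain ⟨T, hsupp, hT⟩ := exists_superset_card_eq hwt (by simpa using htn)
  have hxT : x ∈ Icc 0 (corner T kp) := mem_Icc_corner.2 fun i =>
    ⟨fun _ => by simpa using hx i, fun hi => by_contra fun h => hi (hsupp (by simpa [wt] using h))⟩
  rw [mem_coe, mem_insert, mem_biUnion]
  exact .inr ⟨T, mem_powersetCard.2 ⟨subset_univ T, hT⟩, mem_erase.2 ⟨hx0, hxT⟩⟩

theorem ncard_errBall_zero_lt (hN : 2 ≤ n.choose t) (hkp : 0 ≤ kp) :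
    (errBall n t kp 0).ncard < n.choose t * (kp + 1).toNat ^ t := by
  have htn : t ≤ n := by
    by_contra h
    rw [Nat.choose_eq_zero_of_lt (by omega)] at hN
    omega
  have hpow : 1 ≤ (kp + 1).toNat ^ t := Nat.one_le_pow _ _ (by omega)
  calc (errBall n t kp 0).ncard
      ≤ #(insert 0 ((univ.powersetCard t).biUnion fun T => (Icc 0 (corner T kp)).erase 0)) := by
        rw [← Set.ncard_coe_finset]
        exact Set.ncard_le_ncard (errBall_zero_subset htn)
    _ ≤ 1 + ∑ T ∈ univ.powersetCard t, #((Icc 0 (corner T kp)).erase 0) := by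
        rw [add_comm]
        exact (card_insert_le _ _).trans (Nat.add_le_add_right card_biUnion_le 1)
    _ = 1 + n.choose t * ((kp + 1).toNat ^ t - 1) := by
        have h0 : ∀ T : Finset (Fin n), (0 : Fin n → ℤ) ∈ Icc 0 (corner T kp) := fun T =>
          mem_Icc_corner.2 fun i => ⟨fun _ => ⟨le_rfl, hkp⟩, fun _ => rfl⟩
        rw [sum_congr rfl fun T hT => by
          rw [card_erase_of_mem (h0 T), card_Icc_corner, (mem_powersetCard.1 hT).2],
          sum_const, card_powersetCard, card_univ, Fintype.card_fin, smul_eq_mul]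
    _ < n.choose t * (kp + 1).toNat ^ t := by
        have := Nat.le_mul_of_pos_right (n.choose t) hpow
        rw [Nat.mul_sub_one]
        omega

end ErrorBall

section LatticeTiling

variable {n t : ℕ} {kp : ℤ} {Λ : AddSubgroup (Fin n → ℤ)} {V : Finset (Fin n)}

theorem sub_inf_mem_errBall {x y : Fin n → ℤ} (hx : ∀ i, 0 ≤ x i ∧ x i ≤ kp)
    (hy : ∀ i, 0 ≤ y i) (h : #{i | y i < x i} ≤ t) : x - x ⊓ y ∈ errBall n t kp 0 := by
  refine ⟨fun i => ?_, ?_⟩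
  · simp only [Pi.sub_apply, Pi.inf_apply, neg_zero]
    have := hx i; have := hy i
    omega
  · refine (congrArg card (filter_congr fun i _ => ?_)).trans_le h
    simp only [Pi.sub_apply, Pi.inf_apply]
    omega

/-- `x - x ⊓ y` and `y - x ⊓ y` both lie in the ball and differ by the lattice vector `x - y`. -/
theorem Tiles.eq_of_sub_mem_of_card_lt_le (hT : Tiles (errBall n t kp 0) Λ)
    {x y : Fin n → ℤ} (hx : ∀ i, 0 ≤ x i ∧ x i ≤ kp) (hy : ∀ i, 0 ≤ y i ∧ y i ≤ kp)
    (hxy : x - y ∈ Λ) (h₁ : #{i | y i < x i} ≤ t) (h₂ : #{i | x i < y i} ≤ t) : x = y := by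
  have := hT.eq_of_sub_mem_s11 (sub_inf_mem_errBall hx (fun i => (hy i).1) h₁)
    (sub_inf_mem_errBall hy (fun i => (hx i).1) h₂)
    (by rwa [inf_comm y x, sub_sub_sub_cancel_right])
  rwa [inf_comm y x, sub_left_inj] at this

def IsPosOn (Λ : AddSubgroup (Fin n → ℤ)) (kp : ℤ) (V : Finset (Fin n)) (w : Fin n → ℤ) :
    Prop :=
  w ∈ Λ ∧ w ∈ Icc 0 (corner V kp) ∧ ∀ i ∈ V, 0 < w i

theorem IsPosOn.eq_filter {w : Fin n → ℤ} (hw : IsPosOn Λ kp V w) :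
    V = univ.filter (0 < w ·) := by
  ext i
  simp only [mem_filter, mem_univ, true_and]
  refine ⟨hw.2.2 i, fun h => by_contra fun hi => ?_⟩
  rw [(mem_Icc_corner.1 hw.2.1 i).2 hi] at h
  exact h.false

theorem isPosOn_sub_of_lt_card (hV : #V = t + 1) {x y : Fin n → ℤ}
    (hx : x ∈ Icc 0 (corner V kp)) (hy : y ∈ Icc 0 (corner V kp)) (hxy : x - y ∈ Λ)
    (h : t < #{i | y i < x i}) : IsPosOn Λ kp V (x - y) := by
  have hsub : univ.filter (fun i => y i < x i) ⊆ V := fun i hi => by_contra fun hiV => by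
    have := (mem_Icc_corner.1 hx i).2 hiV
    have := (mem_Icc_corner.1 hy i).2 hiV
    rw [mem_filter] at hi
    omega
  have hlt : ∀ i ∈ V, y i < x i := fun i hi => by
    rw [← eq_of_subset_of_card_le hsub (hV.trans_le h)] at hi
    simpa using hi
  refine ⟨hxy, mem_Icc_corner.2 fun i => ⟨fun hi => ?_, fun hi => ?_⟩, fun i hi => ?_⟩
  · have := (mem_Icc_corner.1 hx i).1 hi
    have := (mem_Icc_corner.1 hy i).1 hi
    have := hlt i hi
    simp only [Pi.sub_apply]
    omega
  · simp [(mem_Icc_corner.1 hx i).2 hi, (mem_Icc_corner.1 hy i).2 hi]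
  · simpa using hlt i hi

theorem Tiles.isPosOn_sub_or (hT : Tiles (errBall n t kp 0) Λ) (hkp : 0 ≤ kp)
    (hV : #V = t + 1) {x y : Fin n → ℤ} (hx : x ∈ Icc 0 (corner V kp))
    (hy : y ∈ Icc 0 (corner V kp)) (hxy : x - y ∈ Λ) (hne : x ≠ y) :
    IsPosOn Λ kp V (x - y) ∨ IsPosOn Λ kp V (y - x) := by
  rcases le_or_gt #{i | y i < x i} t with h₁ | h₁
  · rcases le_or_gt #{i | x i < y i} t with h₂ | h₂
    · exact absurd (hT.eq_of_sub_mem_of_card_lt_le (bounds_of_mem_Icc_corner hkp hx)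
        (bounds_of_mem_Icc_corner hkp hy) hxy h₁ h₂) hne
    · exact .inr (isPosOn_sub_of_lt_card hV hy hx (Λ.sub_mem_comm_iff.1 hxy) h₂)
  · exact .inl (isPosOn_sub_of_lt_card hV hx hy hxy h₁)

theorem Tiles.exists_isPosOn (hT : Tiles (errBall n t kp 0) Λ) (hkp : 0 ≤ kp)
    (hV : #V = t + 1) (hB : (errBall n t kp 0).ncard < (kp + 1).toNat ^ (t + 1)) :
    ∃ w, IsPosOn Λ kp V w := by
  by_contra! h
  refine hB.not_ge ?_
  rw [← hV, ← card_Icc_corner]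
  refine hT.card_le_ncard errBall_zero_finite fun x hx y hy hxy => by_contra fun hne => ?_
  rcases hT.isPosOn_sub_or hkp hV hx hy hxy hne with h' | h' <;> exact h _ h'

/-- A vector of least value at one coordinate is least everywhere: if `w` were not `≥ μ`, then
`μ - w` would be positive on `V` by `Tiles.isPosOn_sub_or`. -/
theorem Tiles.exists_isLeast_isPosOn (hT : Tiles (errBall n t kp 0) Λ) (hkp : 0 ≤ kp)
    (hV : #V = t + 1) (hB : (errBall n t kp 0).ncard < (kp + 1).toNat ^ (t + 1)) :
    ∃ μ, IsLeast {w | IsPosOn Λ kp V w} μ := by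
  classical
  obtain ⟨c, hc⟩ : V.Nonempty := card_pos.1 (by omega)
  obtain ⟨w₀, hw₀⟩ := hT.exists_isPosOn hkp hV hB
  obtain ⟨μ, hμS, hmin⟩ := ((Icc 0 (corner V kp)).filter (IsPosOn Λ kp V)).exists_min_image
    (· c) ⟨w₀, mem_filter.2 ⟨hw₀.2.1, hw₀⟩⟩
  have hμ := (mem_filter.1 hμS).2
  refine ⟨μ, hμ, fun w hw => ?_⟩
  rcases eq_or_ne w μ with rfl | hne
  · exact le_rfl
  rcases hT.isPosOn_sub_or hkp hV hw.2.1 hμ.2.1 (sub_mem hw.1 hμ.1) hne with h | h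
  · exact sub_nonneg.1 (mem_Icc.1 h.2.1).1
  · have := hmin w (mem_filter.2 ⟨hw.2.1, hw⟩)
    have := h.2.2 c hc
    simp only [Pi.sub_apply] at this
    omega

/-- The points of `[0, kp]^V` whose `i`-th coordinate is below `μ i` are pairwise incongruent,
so there are at most `|B|` of them. -/
theorem Tiles.lt_of_isLeast_isPosOn (hT : Tiles (errBall n t kp 0) Λ) (hkp : 0 ≤ kp)
    (hV : #V = t + 1) {μ : Fin n → ℤ} (hμ : IsLeast {w | IsPosOn Λ kp V w} μ) {M : ℕ}
    (hB : (errBall n t kp 0).ncard < M * (kp + 1).toNat ^ t) (i : Fin n) : μ i < M := by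
  by_cases hi : i ∈ V
  case neg =>
    rw [(mem_Icc_corner.1 hμ.1.2.1 i).2 hi]
    exact_mod_cast Nat.pos_of_ne_zero (by rintro rfl; simp at hB)
  have hμi := (mem_Icc_corner.1 hμ.1.2.1 i).1 hi
  set box := Icc 0 (Function.update (corner V kp) i (μ i - 1))
  have hcard : #box ≤ (errBall n t kp 0).ncard :=
    hT.card_le_ncard errBall_zero_finite fun x hx y hy hxy => by_contra fun hne => by
      obtain ⟨hx, hxi⟩ := mem_Icc_update_corner hi (by omega) hx
      obtain ⟨hy, hyi⟩ := mem_Icc_update_corner hi (by omega) hy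
      have := (bounds_of_mem_Icc_corner hkp hx i).1
      have := (bounds_of_mem_Icc_corner hkp hy i).1
      rcases hT.isPosOn_sub_or hkp hV hx hy hxy hne with h | h <;>
        · have := hμ.2 h i
          simp only [Pi.sub_apply] at this
          omega
  have key := card_Icc_zero_update_mul (corner V kp) i (μ i - 1)
  rw [card_Icc_corner, hV, corner, if_pos hi, sub_add_cancel, pow_succ, ← mul_assoc] at key
  have hK : 0 < (kp + 1).toNat := by omega
  have : (μ i).toNat * (kp + 1).toNat ^ t < M * (kp + 1).toNat ^ t :=
    Nat.lt_of_mul_lt_mul_right (a := (kp + 1).toNat) <| by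
      rw [← key]
      exact Nat.mul_lt_mul_of_pos_right (hcard.trans_lt hB) hK
  have := Nat.lt_of_mul_lt_mul_right this
  omega

/-- Fix `c ∈ V ∩ W`: `w - w'` is positive only on `V \ {c}` and negative only on `W \ {c}`. -/
theorem Tiles.eq_of_isPosOn_of_apply_eq (hT : Tiles (errBall n t kp 0) Λ) (hkp : 0 ≤ kp)
    {W : Finset (Fin n)} (hV : #V = t + 1) (hW : #W = t + 1) {c : Fin n} (hcV : c ∈ V)
    (hcW : c ∈ W) {w w' : Fin n → ℤ} (hw : IsPosOn Λ kp V w) (hw' : IsPosOn Λ kp W w')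
    (h : w c = w' c) : w = w' := by
  have card_lt_le : ∀ {V W : Finset (Fin n)} {w w' : Fin n → ℤ}, #V = t + 1 → c ∈ V →
      IsPosOn Λ kp V w → IsPosOn Λ kp W w' → w c = w' c → #{i | w' i < w i} ≤ t := by
    intro V W w w' hV hcV hw hw' h
    calc #{i | w' i < w i} ≤ #(V.erase c) := card_le_card fun i hi => by
          simp only [mem_filter, mem_univ, true_and] at hi
          refine mem_erase.2 ⟨by rintro rfl; omega, by_contra fun hiV => ?_⟩
          have := (mem_Icc_corner.1 hw.2.1 i).2 hiV
          have := (bounds_of_mem_Icc_corner hkp hw'.2.1 i).1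
          omega
      _ = t := by rw [card_erase_of_mem hcV, hV, Nat.add_sub_cancel]
  exact hT.eq_of_sub_mem_of_card_lt_le (bounds_of_mem_Icc_corner hkp hw.2.1)
    (bounds_of_mem_Icc_corner hkp hw'.2.1) (sub_mem hw.1 hw'.1) (card_lt_le hV hcV hw hw' h)
    (card_lt_le hW hcW hw' hw h.symm)

end LatticeTiling

section LeastVectors

variable {n t : ℕ} {kp : ℤ} {Λ : AddSubgroup (Fin n → ℤ)}

theorem Tiles.exists_isPosOn_lt_choose (hT : Tiles (errBall n t kp 0) Λ) (ht : 1 ≤ t)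
    (htn : t < n) (hkp : (n.choose t : ℤ) - 1 ≤ kp) {V : Finset (Fin n)} (hV : #V = t + 1) :
    ∃ μ, IsPosOn Λ kp V μ ∧ ∀ i, μ i < n.choose t := by
  have hN := two_le_choose ht htn
  have hkp0 : 0 ≤ kp := by omega
  have hB := ncard_errBall_zero_lt hN hkp0
  have hB' : (errBall n t kp 0).ncard < (kp + 1).toNat ^ (t + 1) :=
    hB.trans_le (by rw [pow_succ']; exact Nat.mul_le_mul_right _ (by omega))
  obtain ⟨μ, hμ⟩ := hT.exists_isLeast_isPosOn hkp0 hV hB'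
  exact ⟨μ, hμ.1, hT.lt_of_isLeast_isPosOn hkp0 hV hμ hB⟩

theorem IsPosOn.add_self {V : Finset (Fin n)} {w : Fin n → ℤ} (hw : IsPosOn Λ kp V w)
    (h : ∀ i, 2 * w i ≤ kp) : IsPosOn Λ kp V (w + w) := by
  refine ⟨add_mem hw.1 hw.1, mem_Icc_corner.2 fun i => ⟨fun hi => ?_, fun hi => ?_⟩,
    fun i hi => add_pos (hw.2.2 i hi) (hw.2.2 i hi)⟩
  · have := (mem_Icc_corner.1 hw.2.1 i).1 hi
    have := h i
    simp only [Pi.add_apply]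
    omega
  · simp [(mem_Icc_corner.1 hw.2.1 i).2 hi]

theorem Tiles.eq_of_isPosOn_insert (hT : Tiles (errBall n t kp 0) Λ) (hkp : 0 ≤ kp) {c : Fin n}
    {T T' : Finset (Fin n)} (hcT : c ∉ T) (hcT' : c ∉ T') (hTt : #T = t) (hT't : #T' = t)
    {w w' : Fin n → ℤ} (hw : IsPosOn Λ kp (insert c T) w) (hw' : IsPosOn Λ kp (insert c T') w')
    (h : w c = w' c) : T = T' := by
  have := hT.eq_of_isPosOn_of_apply_eq hkp (by rw [card_insert_of_notMem hcT, hTt])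
    (by rw [card_insert_of_notMem hcT', hT't]) (mem_insert_self c T) (mem_insert_self c T') hw hw' h
  rw [← erase_insert hcT, ← erase_insert hcT', hw.eq_filter, hw'.eq_filter, this]

theorem Tiles.exists_doublingFree (hT : Tiles (errBall n t kp 0) Λ) (ht : 1 ≤ t)
    (htn : t < n) (hkp : 2 * (n.choose t : ℤ) - 2 ≤ kp) :
    ∃ A : Finset ℕ, #A = (n - 1).choose t ∧ A ⊆ Icc 1 (n.choose t - 1) ∧ ∀ a ∈ A, 2 * a ∉ A := by
  have hkp0 : 0 ≤ kp := by have := two_le_choose ht htn; omega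
  let c : Fin n := ⟨0, by omega⟩
  let 𝒯 := (univ.erase c).powersetCard t
  have h𝒯 : ∀ T ∈ 𝒯, c ∉ T ∧ #T = t := fun T hT𝒯 => by
    obtain ⟨hsub, hcard⟩ := mem_powersetCard.1 hT𝒯
    exact ⟨fun h => (mem_erase.1 (hsub h)).1 rfl, hcard⟩
  have : ∀ T ∈ 𝒯, ∃ μ, IsPosOn Λ kp (insert c T) μ ∧ ∀ i, μ i < n.choose t := fun T hT𝒯 =>
    hT.exists_isPosOn_lt_choose ht htn (by omega)
      (by rw [card_insert_of_notMem (h𝒯 T hT𝒯).1, (h𝒯 T hT𝒯).2])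
  choose! μ hμ hμN using this
  have hμc : ∀ T ∈ 𝒯, 0 < μ T c := fun T hT𝒯 => (hμ T hT𝒯).2.2 c (mem_insert_self c T)
  have eq_of_apply_eq : ∀ T ∈ 𝒯, ∀ T' ∈ 𝒯, ∀ w, IsPosOn Λ kp (insert c T) w →
      w c = μ T' c → T = T' := fun T hT𝒯 T' hT'𝒯 w hw =>
    hT.eq_of_isPosOn_insert hkp0 (h𝒯 T hT𝒯).1 (h𝒯 T' hT'𝒯).1 (h𝒯 T hT𝒯).2 (h𝒯 T' hT'𝒯).2 hw
      (hμ T' hT'𝒯)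
  refine ⟨𝒯.image fun T => (μ T c).toNat, ?_, ?_, ?_⟩
  · rw [card_image_of_injOn, card_powersetCard, card_erase_of_mem (mem_univ c), card_univ,
      Fintype.card_fin]
    intro T hT𝒯 T' hT'𝒯 h
    have := hμc T hT𝒯; have := hμc T' hT'𝒯
    exact eq_of_apply_eq T hT𝒯 T' hT'𝒯 _ (hμ T hT𝒯) (by simp only at h; omega)
  · simp only [subset_iff, mem_image, mem_Icc]
    rintro _ ⟨T, hT𝒯, rfl⟩
    have := hμc T hT𝒯; have := hμN T hT𝒯 c
    omega
  · simp only [mem_image]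
    rintro _ ⟨T, hT𝒯, rfl⟩ ⟨T', hT'𝒯, h⟩
    have h2μ := (hμ T hT𝒯).add_self fun i => by have := hμN T hT𝒯 i; omega
    have := hμc T hT𝒯
    obtain rfl := eq_of_apply_eq T hT𝒯 T' hT'𝒯 _ h2μ (by simp only [Pi.add_apply]; omega)
    omega

end LeastVectors

theorem stmt_11 (n t : ℕ) (kp : ℤ) (ht : 2 ≤ t) (htn : 4 * t < n)
    (hkp : 2 * (n.choose t : ℤ) - 2 ≤ kp) :
    ¬ ∃ Λ : AddSubgroup (Fin n → ℤ),
      Tiles (errBall n t kp 0) (Λ : Set (Fin n → ℤ)) := by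
  rintro ⟨Λ, hT⟩
  obtain ⟨A, hcard, hA, hdouble⟩ := hT.exists_doublingFree (by omega) (by omega) hkp
  have := four_mul_card_le_of_two_mul_notMem hA hdouble
  have := three_mul_choose_lt htn
  omega
end
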